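/- arXiv:0805.4449 — 2 statements merged into one kernel-verified Lean document; each statement's English description precedes it below -/
import Mathlib

section
/- Let G be a graph and let f be an integer vector in ZV that is both a Z-linear combination of edge vectors and a nonnegative rational combination of edge vectors whose support is a disjoint union of odd cycles with all edge weights 1/2. Then each connected component of G contains an even number of these odd cycles. -/
open scoped Classical

/-- The vertex following position `i` in the cyclic order of the list `l`. -/
def cnext {V : Type*} (l : List V) (i : Fin l.length) : V :=
  l.get ⟨((i : ℕ) + 1) % l.length,
    Nat.mod_lt _ (Nat.lt_of_le_of_lt (Nat.zero_le _) i.isLt)⟩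

/-- A closed walk in the graph `G` (loops allowed), given as a nonempty list of
vertices in cyclic order. -/
def IsClosedWalk {V : Type*} (G : V → V → Prop) (l : List V) : Prop :=
  l ≠ [] ∧ ∀ i : Fin l.length, G (l.get i) (cnext l i)

/-- The image in `ℤV` of the edge `{x, y}` (a loop at `x` if `x = y`, giving `2x`). -/
def eVec {V : Type*} [DecidableEq V] (x y : V) : V → ℤ :=
  fun v => (if v = x then 1 else 0) + (if v = y then 1 else 0)

/-- Reachability in the graph `G` (connected components). -/
def Reach {V : Type*} (G : V → V → Prop) : V → V → Prop :=
  Relation.ReflTransGen (fun a b => G a b ∨ G b a)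

/-!
Pair an edge combination with the indicator of a vertex set `S`: an edge with both ends in `S`
contributes `2 c_e`, and when `S` is a connected component no edge has exactly one end in `S`.
So `∑_{x ∈ S} f x` is even. If `f` is the indicator of a disjoint union of odd cycles, the same
sum is the total length of the cycles in that component, whose parity is their number.
-/

open Finset

lemma Reach.symm {V : Type*} {G : V → V → Prop} {a b : V} (h : Reach G a b) :
    Reach G b a :=
  Std.Symm.symm (r := Relation.ReflTransGen (Relation.SymmGen G)) _ _ h

lemma IsClosedWalk.reach {V : Type*} {G : V → V → Prop} {l : List V} (h : IsClosedWalk G l)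
    {x y : V} (hx : x ∈ l) (hy : y ∈ l) : Reach G x y := by
  obtain ⟨hne, hstep⟩ := h
  have hpos : 0 < l.length := List.length_pos_iff.mpr hne
  have reach_get : ∀ i : Fin l.length, Reach G (l.get ⟨0, hpos⟩) (l.get i) := by
    rintro ⟨n, hn⟩
    induction n with
    | zero => exact Relation.ReflTransGen.refl
    | succ k ih =>
      have hk : k < l.length := Nat.lt_of_succ_lt hn
      have hnext : cnext l ⟨k, hk⟩ = l.get ⟨k + 1, hn⟩ := by
        simp [cnext, Nat.mod_eq_of_lt hn]
      exact (ih hk).tail (Or.inl (hnext ▸ hstep ⟨k, hk⟩))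
  obtain ⟨i, rfl⟩ := List.mem_iff_get.mp hx
  obtain ⟨j, rfl⟩ := List.mem_iff_get.mp hy
  exact (reach_get i).symm.trans (reach_get j)

lemma sum_eVec {V : Type*} [DecidableEq V] (S : Finset V) (x y : V) :
    ∑ v ∈ S, eVec x y v = (if x ∈ S then 1 else 0) + (if y ∈ S then 1 else 0) := by
  simp [eVec, sum_add_distrib]

lemma even_sum_edgeComb_of_forall_mem_iff {V : Type*} [Fintype V] [DecidableEq V]
    (c : V × V → ℤ) (S : Finset V) (hS : ∀ e : V × V, c e ≠ 0 → (e.1 ∈ S ↔ e.2 ∈ S)) :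
    Even (∑ v ∈ S, (∑ e : V × V, c e • eVec e.1 e.2) v) := by
  simp only [Finset.sum_apply, Pi.smul_apply, smul_eq_mul]
  rw [sum_comm]
  refine even_sum _ fun e _ => ?_
  rw [← mul_sum, sum_eVec]
  by_cases hce : c e = 0
  · simp [hce]
  · by_cases h1 : e.1 ∈ S
    · simp only [h1, (hS e hce).mp h1, if_true]
      exact ⟨c e, by ring⟩
    · simp [h1, mt (hS e hce).mpr h1]

lemma sum_indicator_eq_sum_length {V : Type*} [DecidableEq V] (C : Finset (List V))
    (hnodup : ∀ l ∈ C, l.Nodup)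
    (hdisj : ∀ l ∈ C, ∀ l' ∈ C, l ≠ l' → ∀ v : V, ¬ (v ∈ l ∧ v ∈ l'))
    (S : Finset V) (hS : ∀ l ∈ C, ∀ x ∈ l, ∀ y ∈ l, x ∈ S → y ∈ S) :
    ∑ x ∈ S, (if ∃ l ∈ C, x ∈ l then (1 : ℤ) else 0)
      = ∑ l ∈ C.filter (fun l => ∃ x ∈ l, x ∈ S), (l.length : ℤ) := by
  set D := C.filter (fun l => ∃ x ∈ l, x ∈ S)
  have hcover : S.filter (fun x => ∃ l ∈ C, x ∈ l) = D.biUnion List.toFinset := by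
    ext x
    simp only [D, mem_filter, mem_biUnion, List.mem_toFinset]
    constructor
    · rintro ⟨hxS, l, hlC, hxl⟩
      exact ⟨l, ⟨hlC, x, hxl, hxS⟩, hxl⟩
    · rintro ⟨l, ⟨hlC, y, hyl, hyS⟩, hxl⟩
      exact ⟨hS l hlC y hyl x hxl hyS, l, hlC, hxl⟩
  have hpairwise : (D : Set (List V)).PairwiseDisjoint List.toFinset := by
    intro l hl l' hl' hne
    rw [Function.onFun, disjoint_left]
    intro x hx hx'
    exact hdisj l (mem_filter.mp hl).1 l' (mem_filter.mp hl').1 hne x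
      ⟨List.mem_toFinset.mp hx, List.mem_toFinset.mp hx'⟩
  rw [sum_boole, hcover, card_biUnion hpairwise]
  push_cast
  exact sum_congr rfl fun l hl =>
    congrArg _ (List.toFinset_card_of_nodup (hnodup l (mem_filter.mp hl).1))

lemma even_card_of_even_sum_of_odd {ι : Type*} {s : Finset ι} {f : ι → ℕ}
    (hodd : ∀ i ∈ s, Odd (f i)) (h : Even (∑ i ∈ s, f i)) : Even #s := by
  rwa [even_sum_iff_even_card_odd, filter_true_of_mem hodd] at h

/-- If `f ∈ ℤV` is both a `ℤ`-linear combination of edge vectors of `G` and the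
characteristic vector of a disjoint union of odd cycles of `G` (i.e. the sum of the
half-weighted edges of those cycles), then each connected component of `G` contains an
even number of these odd cycles. -/
theorem stmt6 {V : Type*} [Fintype V] [DecidableEq V] (G : V → V → Prop)
    (C : Finset (List V))
    (hC : ∀ l ∈ C, IsClosedWalk G l ∧ l.Nodup ∧ Odd l.length)
    (hdisj : ∀ l ∈ C, ∀ l' ∈ C, l ≠ l' → ∀ v : V, ¬ (v ∈ l ∧ v ∈ l'))
    (f : V → ℤ) (hf : ∀ v : V, f v = if ∃ l ∈ C, v ∈ l then 1 else 0)
    (hz : ∃ c : V × V → ℤ, (∀ e : V × V, c e ≠ 0 → G e.1 e.2) ∧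
        f = ∑ e : V × V, c e • eVec e.1 e.2) :
    ∀ v : V, Even ((C.filter (fun l => ∃ x ∈ l, Reach G v x)).card) := by
  intro v
  obtain ⟨c, hcG, rfl⟩ := hz
  set S := univ.filter (Reach G v)
  have hedge : ∀ e : V × V, c e ≠ 0 → (e.1 ∈ S ↔ e.2 ∈ S) := fun e hce => by
    have h : Reach G e.1 e.2 := .single (Or.inl (hcG e hce))
    simpa [S] using ⟨fun h1 => h1.trans h, fun h2 => h2.trans h.symm⟩
  have hcycle : ∀ l ∈ C, ∀ x ∈ l, ∀ y ∈ l, x ∈ S → y ∈ S := fun l hl x hx y hy hxS =>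
    mem_filter.mpr ⟨mem_univ y, (mem_filter.mp hxS).2.trans ((hC l hl).1.reach hx hy)⟩
  have heven := even_sum_edgeComb_of_forall_mem_iff c S hedge
  rw [sum_congr rfl fun x _ => hf x, sum_indicator_eq_sum_length C (fun l hl => (hC l hl).2.1)
    hdisj S hcycle] at heven
  have hcomponent : C.filter (fun l => ∃ x ∈ l, x ∈ S)
      = C.filter (fun l => ∃ x ∈ l, Reach G v x) := filter_congr fun l _ => by simp [S]
  rw [hcomponent] at heven
  exact even_card_of_even_sum_of_odd (fun l hl => (hC l (mem_filter.mp hl).1).2.2)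
    (by exact_mod_cast heven)
end

section
/- Let G be a graph in which two odd cycles C1, C2 share a vertex (or more generally are joined by a walk of suitable parity making them not an exceptional pair in the induced sense). If C1 and C2 share a vertex v, then the sum of the half-weighted edge vectors of C1 and C2 is a nonnegative integer combination of edge vectors of G. -/
/-- The characteristic vector (in `ℤV`) of the vertices occurring in a list;
for an odd cycle this is the sum of its half-weighted edges. -/
def ind {V : Type*} [DecidableEq V] (l : List V) : V → ℤ :=
  fun v => if v ∈ l then 1 else 0

/-!
Rotate both cycles so that they start at the common vertex `v`, say `v a₁ … aₘ` and
`v b₁ … bₙ` with `m, n` even. Going once around each gives the closed walk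
`W = v a₁ … aₘ v b₁ … bₙ` of even length `m + n + 2`; its edges at even positions,
`{v, a₁}, {a₂, a₃}, …, {aₘ, v}, {b₁, b₂}, …, {bₙ₋₁, bₙ}`, cover every vertex of `W` exactly
as often as it occurs in `W`, i.e. once for each cycle through it.
-/

section

open List

variable {V : Type*}

/-- `pairUp [a, b, c, d, e] = [(a, b), (c, d)]`. -/
def pairUp : List V → List (V × V)
  | a :: b :: t => (a, b) :: pairUp t
  | _ => []

theorem List.IsChain.rel_of_mem_pairUp {R : V → V → Prop} :
    ∀ {L : List V}, IsChain R L → ∀ p ∈ pairUp L, R p.1 p.2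
  | [], _, _, hp | [_], _, _, hp => by simp [pairUp] at hp
  | a :: b :: t, h, p, hp => by
      rw [isChain_cons_cons] at h
      rcases mem_cons.1 hp with rfl | hp
      · exact h.1
      · exact h.2.tail.rel_of_mem_pairUp p hp

theorem sum_map_eVec_pairUp [DecidableEq V] :
    ∀ {L : List V}, Even L.length →
      ((pairUp L).map fun p => eVec p.1 p.2).sum = fun w => (L.count w : ℤ)
  | [], _ => by funext; simp [pairUp]
  | [_], h => by simp at h
  | a :: b :: t, h => by
      have ih := sum_map_eVec_pairUp (L := t) (by simpa [parity_simps] using h)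
      funext w
      simp only [pairUp, map_cons, sum_cons, ih, Pi.add_apply, eVec, count_cons, beq_iff_eq]
      split_ifs <;> subst_vars <;> first | omega | contradiction

theorem List.sum_map_eq_sum_count_zsmul {α G : Type*} [Fintype α] [DecidableEq α]
    [AddCommGroup G] (E : List α) (f : α → G) :
    (E.map f).sum = ∑ e, (E.count e : ℤ) • f e := by
  calc (E.map f).sum = ∑ e ∈ E.toFinset, E.count e • f e := Finset.sum_list_map_count E f
    _ = ∑ e, E.count e • f e := Finset.sum_subset (Finset.subset_univ _) fun e _ he => by
        rw [count_eq_zero_of_not_mem (by simpa using he), zero_smul]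
    _ = ∑ e, (E.count e : ℤ) • f e := by simp only [natCast_zsmul]

theorem cnext_eq_getElem_append_head {l : List V} (hl : l ≠ []) (i : Fin l.length) :
    cnext l i = (l ++ [l.head hl])[(i : ℕ) + 1]'(by simp) := by
  rcases Nat.lt_or_ge ((i : ℕ) + 1) l.length with hi | hi
  · simp [cnext, Nat.mod_eq_of_lt hi, getElem_append_left hi]
  · have hi' : (i : ℕ) + 1 = l.length := by omega
    simp [cnext, hi', head_eq_getElem]

theorem IsClosedWalk.cycle_chain {G : V → V → Prop} {l : List V} (h : IsClosedWalk G l) :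
    Cycle.Chain G (l : Cycle V) := by
  obtain ⟨hl, hG⟩ := h
  obtain ⟨a, t, rfl⟩ := ne_nil_iff_exists_cons.1 hl
  rw [Cycle.chain_coe_cons, ← cons_append, isChain_iff_getElem]
  intro i hi
  have hi' : i < (a :: t).length := by simpa using hi
  have hedge := hG ⟨i, hi'⟩
  rw [cnext_eq_getElem_append_head hl, head_cons] at hedge
  rwa [getElem_append_left hi']

theorem Cycle.Chain.exists_isRotated_isChain {R : V → V → Prop} {l : List V}
    (h : Cycle.Chain R (l : Cycle V)) {a : V} (ha : a ∈ l) :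
    ∃ t, l ~r a :: t ∧ IsChain R (a :: (t ++ [a])) := by
  obtain ⟨s, t, rfl⟩ := append_of_mem ha
  have hrot : s ++ a :: t ~r a :: (t ++ s) := isRotated_append
  rw [Cycle.coe_eq_coe.2 hrot, Cycle.chain_coe_cons] at h
  exact ⟨t ++ s, hrot, h⟩

theorem List.Nodup.ind_eq_count [DecidableEq V] {l : List V} (h : l.Nodup) (w : V) :
    ind l w = l.count w := by
  rw [ind, h.count]
  split_ifs <;> rfl

end

theorem stmt8_general {V : Type*} [Fintype V] [DecidableEq V] (G : V → V → Prop)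
    (l1 l2 : List V)
    (h1 : IsClosedWalk G l1 ∧ l1.Nodup ∧ Odd l1.length)
    (h2 : IsClosedWalk G l2 ∧ l2.Nodup ∧ Odd l2.length)
    (v : V) (hv : v ∈ l1 ∧ v ∈ l2) :
    ∃ m : V × V → ℕ, (∀ e : V × V, m e ≠ 0 → G e.1 e.2) ∧
      ind l1 + ind l2 = ∑ e : V × V, (m e : ℤ) • eVec e.1 e.2 := by
  obtain ⟨t1, hrot1, hchain1⟩ := h1.1.cycle_chain.exists_isRotated_isChain hv.1
  obtain ⟨t2, hrot2, hchain2⟩ := h2.1.cycle_chain.exists_isRotated_isChain hv.2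
  set W := (v :: t1) ++ (v :: t2)
  have hW : List.IsChain G W := List.isChain_cons_split.2 ⟨hchain1, hchain2.left_of_append⟩
  have hlen : Even W.length := by
    rw [List.length_append, ← hrot1.perm.length_eq, ← hrot2.perm.length_eq]
    exact h1.2.2.add_odd h2.2.2
  have hcount : ind l1 + ind l2 = fun w => (W.count w : ℤ) := by
    funext w
    rw [Pi.add_apply, h1.2.1.ind_eq_count, h2.2.1.ind_eq_count, List.count_append,
      hrot1.perm.count_eq, hrot2.perm.count_eq, Nat.cast_add]
  refine ⟨fun e => (pairUp W).count e,
    fun e he => hW.rel_of_mem_pairUp e (List.count_pos_iff.1 (Nat.pos_of_ne_zero he)), ?_⟩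
  rw [hcount, ← sum_map_eVec_pairUp hlen]
  -- the two sides count with different, but equal, `BEq (V × V)` instances
  convert List.sum_map_eq_sum_count_zsmul (pairUp W) fun p => eVec p.1 p.2

/-- If two odd cycles `C1`, `C2` of `G` share a vertex `v`, then the sum of the
half-weighted edge vectors of `C1` and `C2` is a nonnegative integer combination of
edge vectors of `G`. -/
theorem stmt8 {V : Type*} [Fintype V] [DecidableEq V] (G : V → V → Prop)
    (hG : Symmetric G) (l1 l2 : List V)
    (h1 : IsClosedWalk G l1 ∧ l1.Nodup ∧ Odd l1.length)
    (h2 : IsClosedWalk G l2 ∧ l2.Nodup ∧ Odd l2.length)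
    (v : V) (hv : v ∈ l1 ∧ v ∈ l2) :
    ∃ m : V × V → ℕ, (∀ e : V × V, m e ≠ 0 → G e.1 e.2) ∧
      ind l1 + ind l2 = ∑ e : V × V, (m e : ℤ) • eVec e.1 e.2 :=
  stmt8_general G l1 l2 h1 h2 v hv
end
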